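/- Let E be a finite-dimensional real inner product space. Let f : E → ℝ be differentiable with gradient ∇f that is Lipschitz with constant L > 0, let Ψ : E → ℝ be any function, let λ ≥ 0, and fix η with 0 < η ≤ 1/(2L). Suppose x ∈ E and x⁺ is a global minimizer of z ↦ ηλΨ(z) + (1/2)‖z − (x − η∇f(x))‖². Then f(x⁺) + λΨ(x⁺) ≤ f(x) + λΨ(x) − (1/(4η))‖x⁺ − x‖². -/

import Mathlib

/-!
Along the segment from `x` to `x⁺`, an `L`-Lipschitz gradient gives the descent lemma
`f x⁺ ≤ f x + ⟪∇f x, x⁺ - x⟫ + L/2 ‖x⁺ - x‖²`. Comparing the proximal objective at its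
minimizer `x⁺` with its value at `x` gives
`λ Ψ x⁺ + ⟪∇f x, x⁺ - x⟫ + 1/(2η) ‖x⁺ - x‖² ≤ λ Ψ x`. Adding the two, the linear terms cancel
and `L/2 - 1/(2η) ≤ -1/(4η)` because `η ≤ 1/(2L)`.
-/

open InnerProductSpace

section

variable {E : Type*} [NormedAddCommGroup E] [InnerProductSpace ℝ E]

lemma hasDerivAt_comp_add_smul [CompleteSpace E] {f : E → ℝ} {f' : E → E}
    (hf : ∀ x, HasGradientAt f (f' x) x) (x d : E) (t : ℝ) :
    HasDerivAt (fun s : ℝ => f (x + s • d)) ⟪f' (x + t • d), d⟫_ℝ t := by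
  have hline : HasDerivAt (fun s : ℝ => x + s • d) d t := by
    simpa using ((hasDerivAt_id t).smul_const d).const_add x
  exact (hf (x + t • d)).hasFDerivAt.comp_hasDerivAt t hline

lemma inner_add_smul_le_of_lipschitz {f' : E → E} {L : ℝ}
    (hlip : ∀ x y, ‖f' x - f' y‖ ≤ L * ‖x - y‖) (x d : E) {t : ℝ} (ht : 0 ≤ t) :
    ⟪f' (x + t • d), d⟫_ℝ ≤ ⟪f' x, d⟫_ℝ + L * t * ‖d‖ ^ 2 := by
  have hdiff : ‖f' (x + t • d) - f' x‖ ≤ L * t * ‖d‖ := by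
    simpa [norm_smul, abs_of_nonneg ht, mul_assoc] using hlip (x + t • d) x
  calc ⟪f' (x + t • d), d⟫_ℝ
      = ⟪f' x, d⟫_ℝ + ⟪f' (x + t • d) - f' x, d⟫_ℝ := by rw [inner_sub_left]; ring
    _ ≤ ⟪f' x, d⟫_ℝ + ‖f' (x + t • d) - f' x‖ * ‖d‖ := by gcongr; exact real_inner_le_norm _ _
    _ ≤ ⟪f' x, d⟫_ℝ + L * t * ‖d‖ * ‖d‖ := by gcongr
    _ = ⟪f' x, d⟫_ℝ + L * t * ‖d‖ ^ 2 := by ring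

theorem le_add_inner_add_sq_of_lipschitz_gradient [CompleteSpace E] {f : E → ℝ} {f' : E → E}
    (hf : ∀ x, HasGradientAt f (f' x) x) {L : ℝ} (hlip : ∀ x y, ‖f' x - f' y‖ ≤ L * ‖x - y‖)
    (x d : E) :
    f (x + d) ≤ f x + ⟪f' x, d⟫_ℝ + L / 2 * ‖d‖ ^ 2 := by
  set B : ℝ → ℝ := fun t => f x + t * ⟪f' x, d⟫_ℝ + L / 2 * t ^ 2 * ‖d‖ ^ 2
  have hB : ∀ t, HasDerivAt B (⟪f' x, d⟫_ℝ + L * t * ‖d‖ ^ 2) t := fun t => by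
    have := (((hasDerivAt_id' t).mul_const ⟪f' x, d⟫_ℝ).const_add (f x)).add
      (((hasDerivAt_pow 2 t).const_mul (L / 2)).mul_const (‖d‖ ^ 2))
    refine this.congr_deriv ?_
    push_cast
    ring
  have hline := hasDerivAt_comp_add_smul hf x d
  have hcomp : ∀ t ∈ Set.Icc (0 : ℝ) 1, f (x + t • d) ≤ B t :=
    image_le_of_deriv_right_le_deriv_boundary
      (fun t _ => (hline t).continuousAt.continuousWithinAt)
      (fun t _ => (hline t).hasDerivWithinAt) (by simp [B])
      (fun t _ => (hB t).continuousAt.continuousWithinAt)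
      (fun t _ => (hB t).hasDerivWithinAt)
      (fun t ht => inner_add_smul_le_of_lipschitz hlip x d ht.1)
  simpa [B] using hcomp 1 (by simp)

lemma norm_sub_sub_smul_sq (x y v : E) (η : ℝ) :
    ‖y - (x - η • v)‖ ^ 2 = ‖y - x‖ ^ 2 + 2 * η * ⟪v, y - x⟫_ℝ + ‖x - (x - η • v)‖ ^ 2 := by
  rw [show y - (x - η • v) = (y - x) + η • v by abel, show x - (x - η • v) = η • v by abel,
    norm_add_sq_real, real_inner_smul_right, real_inner_comm]
  ring

end

theorem prox_grad_sufficient_decrease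
    {E : Type*} [NormedAddCommGroup E] [InnerProductSpace ℝ E] [FiniteDimensional ℝ E]
    (f : E → ℝ) (f' : E → E) (hf : ∀ x, HasGradientAt f (f' x) x)
    (L : ℝ) (hlip : ∀ x y, ‖f' x - f' y‖ ≤ L * ‖x - y‖)
    (Ψ : E → ℝ) (lam : ℝ)
    (η : ℝ) (hη0 : 0 < η) (hη : η ≤ 1 / (2 * L))
    (x xplus : E)
    (hprox : ∀ z : E,
      η * lam * Ψ xplus + (1 / 2) * ‖xplus - (x - η • f' x)‖ ^ 2 ≤
        η * lam * Ψ z + (1 / 2) * ‖z - (x - η • f' x)‖ ^ 2) :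
    f xplus + lam * Ψ xplus ≤ f x + lam * Ψ x - (1 / (4 * η)) * ‖xplus - x‖ ^ 2 := by
  have hprox_x := hprox x
  rw [norm_sub_sub_smul_sq x xplus (f' x) η] at hprox_x
  have hdescent := le_add_inner_add_sq_of_lipschitz_gradient hf hlip x (xplus - x)
  rw [add_sub_cancel] at hdescent
  have h2L : 0 < 2 * L := one_div_pos.mp (hη0.trans_le hη)
  have hηL : 2 * L * η ≤ 1 := by rwa [le_div_iff₀' h2L] at hη
  have hquad : η * (L / 2 * ‖xplus - x‖ ^ 2) ≤ ‖xplus - x‖ ^ 2 / 4 := by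
    linarith [mul_le_mul_of_nonneg_right hηL (sq_nonneg ‖xplus - x‖)]
  have hcoef : η * (1 / (4 * η) * ‖xplus - x‖ ^ 2) = ‖xplus - x‖ ^ 2 / 4 := by
    field_simp
  rw [← mul_le_mul_iff_of_pos_left hη0]
  linarith [mul_le_mul_of_nonneg_left hdescent hη0.le]
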